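/- For z ≠ 0, the Laplacian of the function z ↦ log(√(1+|z|^{1/3})/|z|^{5/6}) equals (1/18)·1/((1+|z|^{1/3})² |z|^{5/3}). -/

import Mathlib

/-- The Laplacian of `u : ℂ → ℝ` at `z`: sum of second derivatives in the
real and imaginary coordinate directions. -/
noncomputable def lap (u : ℂ → ℝ) (z : ℂ) : ℝ :=
  iteratedDeriv 2 (fun t : ℝ => u (z + (t : ℂ))) 0 +
    iteratedDeriv 2 (fun t : ℝ => u (z + (t : ℂ) * Complex.I)) 0

open Real Filter Topology

namespace MindaAux

noncomputable def F (s : ℝ) : ℝ :=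
  (1/2) * Real.log (1 + s ^ ((1:ℝ)/6)) - (5/12) * Real.log s

noncomputable def f1 (s : ℝ) : ℝ :=
  1/12 * (s ^ (-(5:ℝ)/6) * (1 + s ^ ((1:ℝ)/6))⁻¹) - 5/12 * s⁻¹

noncomputable def f2 (s : ℝ) : ℝ :=
  -(5/72) * s ^ (-(11:ℝ)/6) * (1 + s ^ ((1:ℝ)/6))⁻¹
  - (1/72) * s ^ (-(5:ℝ)/3) * ((1 + s ^ ((1:ℝ)/6))^2)⁻¹
  + (5/12) * (s^2)⁻¹

lemma one_add_pos {s : ℝ} (hs : 0 < s) : 0 < 1 + s ^ ((1:ℝ)/6) := by positivity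

lemma hF {s : ℝ} (hs : 0 < s) : HasDerivAt F (f1 s) s := by
  have h1 : HasDerivAt (fun x : ℝ => x ^ ((1:ℝ)/6)) ((1/6) * s ^ ((1:ℝ)/6 - 1)) s := by
    simpa using Real.hasDerivAt_rpow_const (p := (1:ℝ)/6) (Or.inl hs.ne')
  have h2 : HasDerivAt (fun x : ℝ => 1 + x ^ ((1:ℝ)/6)) ((1/6) * s ^ ((1:ℝ)/6 - 1)) s :=
    h1.const_add 1
  have hne : 1 + s ^ ((1:ℝ)/6) ≠ 0 := (one_add_pos hs).ne'
  have h3 : HasDerivAt F _ s := ((h2.log hne).const_mul (1/2:ℝ)).sub ((Real.hasDerivAt_log hs.ne').const_mul (5/12:ℝ))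
  convert h3 using 1
  have he : ((1:ℝ)/6 - 1) = -(5:ℝ)/6 := by norm_num
  rw [f1, he]
  field_simp
  ring

lemma hf1 {s : ℝ} (hs : 0 < s) : HasDerivAt f1 (f2 s) s := by
  have hne : 1 + s ^ ((1:ℝ)/6) ≠ 0 := (one_add_pos hs).ne'
  have ha : HasDerivAt (fun x : ℝ => x ^ (-(5:ℝ)/6)) ((-(5:ℝ)/6) * s ^ (-(5:ℝ)/6 - 1)) s := by
    simpa using Real.hasDerivAt_rpow_const (p := -(5:ℝ)/6) (Or.inl hs.ne')
  have h1 : HasDerivAt (fun x : ℝ => x ^ ((1:ℝ)/6)) ((1/6) * s ^ ((1:ℝ)/6 - 1)) s := by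
    simpa using Real.hasDerivAt_rpow_const (p := (1:ℝ)/6) (Or.inl hs.ne')
  have h2 : HasDerivAt (fun x : ℝ => 1 + x ^ ((1:ℝ)/6)) ((1/6) * s ^ ((1:ℝ)/6 - 1)) s :=
    h1.const_add 1
  have hb : HasDerivAt (fun x : ℝ => (1 + x ^ ((1:ℝ)/6))⁻¹)
      (-((1/6) * s ^ ((1:ℝ)/6 - 1)) / (1 + s ^ ((1:ℝ)/6))^2) s := h2.inv hne
  have hinv : HasDerivAt (fun x : ℝ => x⁻¹) (-(s^2)⁻¹) s := hasDerivAt_inv hs.ne'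
  have h3 := (((ha.mul hb).const_mul (1/12:ℝ)).sub (hinv.const_mul (5/12:ℝ)))
  have h4 : HasDerivAt f1
      (1 / 12 * (-(5:ℝ) / 6 * s ^ (-(5:ℝ)/6 - 1) * (1 + s ^ ((1:ℝ)/6))⁻¹ +
        s ^ (-(5:ℝ)/6) * (-(1 / 6 * s ^ ((1:ℝ)/6 - 1)) / (1 + s ^ ((1:ℝ)/6)) ^ 2)) -
      5 / 12 * -(s ^ 2)⁻¹) s := h3
  have he1 : (-(5:ℝ)/6 - 1) = -(11:ℝ)/6 := by norm_num
  have he2 : ((1:ℝ)/6 - 1) = -(5:ℝ)/6 := by norm_num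
  have he3 : s ^ (-(5:ℝ)/6) * s ^ (-(5:ℝ)/6) = s ^ (-(5:ℝ)/3) := by
    rw [← Real.rpow_add hs]; norm_num
  convert h4 using 1
  show -(5/72) * s ^ (-(11:ℝ)/6) * (1 + s ^ ((1:ℝ)/6))⁻¹
    - (1/72) * s ^ (-(5:ℝ)/3) * ((1 + s ^ ((1:ℝ)/6))^2)⁻¹
    + (5/12) * (s^2)⁻¹ = _
  rw [he1, he2]
  linear_combination ((1:ℝ)/72) * ((1 + s ^ ((1:ℝ)/6))^2)⁻¹ * he3


lemma hq (a b t : ℝ) : HasDerivAt (fun t : ℝ => (a+t)^2 + b^2) (2*(a+t)) t := by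
  have h : HasDerivAt (fun t : ℝ => (a+t)) 1 t := (hasDerivAt_id t).const_add a
  simpa using (h.pow 2).add_const (b^2)

lemma hG (a b t : ℝ) (h : 0 < (a+t)^2 + b^2) :
    HasDerivAt (fun t : ℝ => F ((a+t)^2 + b^2)) (f1 ((a+t)^2 + b^2) * (2*(a+t))) t :=
  HasDerivAt.comp (h₂ := F) t (hF h) (hq a b t)

lemma key (a b : ℝ) (h : 0 < a^2 + b^2) :
    iteratedDeriv 2 (fun t : ℝ => F ((a+t)^2 + b^2)) 0
      = f2 (a^2+b^2) * (2*a)^2 + f1 (a^2+b^2) * 2 := by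
  have hc : Continuous fun t : ℝ => (a+t)^2 + b^2 := by continuity
  have h0 : ∀ᶠ t in 𝓝 (0:ℝ), 0 < (a+t)^2 + b^2 := by
    have := hc.continuousAt (x := (0:ℝ))
    exact this.eventually (p := fun y => 0 < y) (eventually_gt_nhds (by simpa using h))
  have hd : deriv (fun t : ℝ => F ((a+t)^2 + b^2))
      =ᶠ[𝓝 (0:ℝ)] fun t => f1 ((a+t)^2 + b^2) * (2*(a+t)) :=
    h0.mono fun t ht => (hG a b t ht).deriv
  have hq0 : HasDerivAt (fun t : ℝ => (a+t)^2 + b^2) (2*(a+0)) 0 := hq a b 0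
  have hb1 : HasDerivAt (fun t : ℝ => f1 ((a+t)^2 + b^2)) (f2 ((a+0)^2+b^2) * (2*(a+0))) 0 :=
    (hf1 (by simpa using h)).comp 0 hq0
  have hb2 : HasDerivAt (fun t : ℝ => 2*(a+t)) 2 0 := by
    simpa using ((hasDerivAt_id (0:ℝ)).const_add a).const_mul 2
  have hprod : HasDerivAt (fun t : ℝ => f1 ((a+t)^2 + b^2) * (2*(a+t))) _ 0 := hb1.mul hb2
  rw [show (2:ℕ) = 1+1 from rfl, iteratedDeriv_succ, iteratedDeriv_one, hd.deriv_eq,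
    hprod.deriv]
  simp
  ring

lemma combine (s : ℝ) (hs : 0 < s) :
    4*s*f2 s + 4*f1 s = (1/18) * (s ^ (-(5:ℝ)/6) / (1 + s ^ ((1:ℝ)/6))^2) := by
  set A := s ^ ((1:ℝ)/6) with hA
  have hApos : 0 < A := Real.rpow_pos_of_pos hs _
  have hp : ∀ n : ℕ, s ^ ((n:ℝ)/6) = A ^ n := by
    intro n
    rw [hA, ← Real.rpow_natCast (s ^ ((1:ℝ)/6)) n, ← Real.rpow_mul hs.le, one_div_mul_eq_div]
  have h5 : s ^ (-(5:ℝ)/6) = (A^5)⁻¹ := by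
    rw [← hp 5, ← Real.rpow_neg hs.le]; norm_num
  have h11 : s ^ (-(11:ℝ)/6) = (A^11)⁻¹ := by
    rw [← hp 11, ← Real.rpow_neg hs.le]; norm_num
  have h10 : s ^ (-(5:ℝ)/3) = (A^10)⁻¹ := by
    rw [← hp 10, ← Real.rpow_neg hs.le]; norm_num
  have h6 : s = A ^ 6 := by rw [← hp 6]; norm_num [Real.rpow_natCast]
  rw [f1, f2, h5, h11, h10, ← hA, h6]
  have h1A : 0 < 1 + A := by positivity
  field_simp
  ring

lemma u_eq (w : ℂ) (hw : w ≠ 0) :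
    Real.log (Real.sqrt (1 + ‖w‖ ^ ((1:ℝ)/3)) / ‖w‖ ^ ((5:ℝ)/6))
      = F (w.re^2 + w.im^2) := by
  have hr : 0 < ‖w‖ := norm_pos_iff.mpr hw
  have hsq : w.re^2 + w.im^2 = ‖w‖^2 := by
    rw [Complex.sq_norm, Complex.normSq_apply]; ring
  rw [hsq, F]
  have h16 : (‖w‖^2 : ℝ) ^ ((1:ℝ)/6) = ‖w‖ ^ ((1:ℝ)/3) := by
    rw [← Real.rpow_natCast ‖w‖ 2, ← Real.rpow_mul hr.le]
    norm_num
  have hpos1 : 0 < 1 + ‖w‖ ^ ((1:ℝ)/3) := by positivity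
  have hpos2 : 0 < ‖w‖ ^ ((5:ℝ)/6) := Real.rpow_pos_of_pos hr _
  rw [h16, Real.log_div (by positivity) hpos2.ne', Real.log_sqrt hpos1.le,
    Real.log_rpow hr, Real.log_pow]
  push_cast
  ring

theorem main :
    ∀ z : ℂ, z ≠ 0 →
      (iteratedDeriv 2 (fun t : ℝ =>
          Real.log (Real.sqrt (1 + ‖z + (t:ℂ)‖ ^ ((1:ℝ)/3)) / ‖z + (t:ℂ)‖ ^ ((5:ℝ)/6))) 0 +
        iteratedDeriv 2 (fun t : ℝ =>
          Real.log (Real.sqrt (1 + ‖z + (t:ℂ)*Complex.I‖ ^ ((1:ℝ)/3)) / ‖z + (t:ℂ)*Complex.I‖ ^ ((5:ℝ)/6))) 0)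
        = (1 / 18) * (1 / ((1 + ‖z‖ ^ ((1:ℝ)/3)) ^ 2 * ‖z‖ ^ ((5:ℝ)/3))) := by
  intro z hz
  have iter2_congr : ∀ {f g : ℝ → ℝ}, f =ᶠ[𝓝 (0:ℝ)] g →
      iteratedDeriv 2 f 0 = iteratedDeriv 2 g 0 := by
    intro f g h
    rw [show (2:ℕ) = 1+1 from rfl, iteratedDeriv_succ, iteratedDeriv_one,
      iteratedDeriv_succ, iteratedDeriv_one]
    exact h.deriv.deriv_eq
  set x := z.re with hx
  set y := z.im with hy
  have hs : 0 < x^2 + y^2 := by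
    have := Complex.normSq_pos.mpr hz
    rw [Complex.normSq_apply] at this
    nlinarith [this]
  have hc1 : Continuous fun t : ℝ => z + (t:ℂ) := by continuity
  have hc2 : Continuous fun t : ℝ => z + (t:ℂ)*Complex.I := by continuity
  have hne1 : ∀ᶠ t : ℝ in 𝓝 0, z + (t:ℂ) ≠ 0 :=
    hc1.continuousAt.eventually_ne (by simpa using hz)
  have hne2 : ∀ᶠ t : ℝ in 𝓝 0, z + (t:ℂ)*Complex.I ≠ 0 :=
    hc2.continuousAt.eventually_ne (by simpa using hz)
  have e1 : (fun t : ℝ =>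
      Real.log (Real.sqrt (1 + ‖z + (t:ℂ)‖ ^ ((1:ℝ)/3)) / ‖z + (t:ℂ)‖ ^ ((5:ℝ)/6)))
      =ᶠ[𝓝 (0:ℝ)] fun t => F ((x+t)^2 + y^2) := by
    refine hne1.mono fun t ht => ?_
    have := u_eq (z + (t:ℂ)) ht
    simpa using this
  have e2 : (fun t : ℝ =>
      Real.log (Real.sqrt (1 + ‖z + (t:ℂ)*Complex.I‖ ^ ((1:ℝ)/3)) / ‖z + (t:ℂ)*Complex.I‖ ^ ((5:ℝ)/6)))
      =ᶠ[𝓝 (0:ℝ)] fun t => F ((y+t)^2 + x^2) := by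
    refine hne2.mono fun t ht => ?_
    have := u_eq (z + (t:ℂ)*Complex.I) ht
    simpa [add_comm, add_left_comm] using this
  rw [iter2_congr e1, iter2_congr e2, key x y hs, key y x (by linarith)]
  have hc := combine (x^2+y^2) hs
  have hyx : y^2 + x^2 = x^2 + y^2 := by ring
  rw [hyx]
  have hcomb : f2 (x^2+y^2) * (2*x)^2 + f1 (x^2+y^2) * 2 +
      (f2 (x^2+y^2) * (2*y)^2 + f1 (x^2+y^2) * 2)
      = (1/18) * ((x^2+y^2) ^ (-(5:ℝ)/6) / (1 + (x^2+y^2) ^ ((1:ℝ)/6))^2) := by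
    linear_combination hc
  rw [hcomb]
  have hr : 0 < ‖z‖ := norm_pos_iff.mpr hz
  have hsq : x^2 + y^2 = ‖z‖^2 := by
    rw [hx, hy, Complex.sq_norm, Complex.normSq_apply]; ring
  rw [hsq]
  have h16 : (‖z‖^2 : ℝ) ^ ((1:ℝ)/6) = ‖z‖ ^ ((1:ℝ)/3) := by
    rw [← Real.rpow_natCast ‖z‖ 2, ← Real.rpow_mul hr.le]; norm_num
  have h56 : (‖z‖^2 : ℝ) ^ (-(5:ℝ)/6) = (‖z‖ ^ ((5:ℝ)/3))⁻¹ := by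
    rw [← Real.rpow_natCast ‖z‖ 2, ← Real.rpow_mul hr.le, ← Real.rpow_neg hr.le]
    norm_num
  rw [h16, h56]
  have h1 : 0 < 1 + ‖z‖ ^ ((1:ℝ)/3) := by positivity
  have h2 : 0 < ‖z‖ ^ ((5:ℝ)/3) := Real.rpow_pos_of_pos hr _
  field_simp

end MindaAux


/-- For `z ≠ 0`, `Δ log(√(1+|z|^{1/3})/|z|^{5/6})
  = (1/18)·1/((1+|z|^{1/3})²|z|^{5/3})`. -/
theorem lap_log_minda_schober_factor :
    ∀ z : ℂ, z ≠ 0 →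
      lap (fun w : ℂ =>
          Real.log (Real.sqrt (1 + ‖w‖ ^ ((1 : ℝ) / 3)) / ‖w‖ ^ ((5 : ℝ) / 6))) z
        = (1 / 18) * (1 / ((1 + ‖z‖ ^ ((1 : ℝ) / 3)) ^ 2 * ‖z‖ ^ ((5 : ℝ) / 3))) := by
  intro z hz
  simpa [lap] using MindaAux.main z hz
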